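/- Assume Conjectures 1(1) and 2. Let k be a field of characteristic p and let f ∈ ME_n(k) be invertible over k with det(Jac(f)) = 1 and affine part identity. Then f is a strong Keller map over k. -/

import Mathlib

open MvPolynomial

noncomputable section

/-- The total degree `|α|` of a multi-index `α`. -/
def mdeg {n : ℕ} (α : Fin n →₀ ℕ) : ℕ := α.sum fun _ e => e

/-- The determinant of the Jacobian matrix `(∂F_i/∂x_j)` of a polynomial endomorphism. -/
def jacDet {n : ℕ} {R : Type*} [CommRing R] (F : Fin n → MvPolynomial (Fin n) R) :
    MvPolynomial (Fin n) R :=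
  (Matrix.of fun i j => MvPolynomial.pderiv j (F i)).det

/-- `F` has degree at most `d`. -/
def DegLE {n : ℕ} {R : Type*} [CommRing R] (F : Fin n → MvPolynomial (Fin n) R) (d : ℕ) : Prop :=
  ∀ i, (F i).totalDegree ≤ d

/-- `F` has affine part the identity: `F_i = x_i + (terms of degree ≥ 2)`. -/
def AffinePartId {n : ℕ} {R : Type*} [CommRing R] (F : Fin n → MvPolynomial (Fin n) R) : Prop :=
  ∀ (i : Fin n) (α : Fin n →₀ ℕ), mdeg α ≤ 1 →
    MvPolynomial.coeff α (F i) = MvPolynomial.coeff α (MvPolynomial.X i : MvPolynomial (Fin n) R)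

/-- `F` is an invertible polynomial map: there is `G` with `F∘G = G∘F = id`. -/
def IsInvertible {n : ℕ} {R : Type*} [CommRing R] (F : Fin n → MvPolynomial (Fin n) R) : Prop :=
  ∃ G : Fin n → MvPolynomial (Fin n) R,
    (∀ i, MvPolynomial.bind₁ G (F i) = MvPolynomial.X i) ∧
    (∀ i, MvPolynomial.bind₁ F (G i) = MvPolynomial.X i)

/-- Index type of the universal coefficients `c_{i,α}`, `1 ≤ i ≤ n`, `2 ≤ |α| ≤ d`. -/
abbrev Idx (n d : ℕ) : Type := Fin n × {α : Fin n →₀ ℕ // 2 ≤ mdeg α ∧ mdeg α ≤ d}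

/-- The finite set of multi-indices `α` with `2 ≤ |α| ≤ d`. -/
def midxSet (n d : ℕ) : Finset (Fin n →₀ ℕ) :=
  (Finset.Iic (Finsupp.equivFunOnFinite.symm fun _ : Fin n => d)).filter
    fun α => 2 ≤ mdeg α ∧ mdeg α ≤ d

/-- The universal degree-`d` endomorphism with affine part identity, written over
`C_{ℤ,d} = ℤ[c_{i,α}]`. -/
def univFZ (n d : ℕ) : Fin n → MvPolynomial (Fin n) (MvPolynomial (Idx n d) ℤ) :=
  fun i => MvPolynomial.X i +
    ∑ α ∈ (midxSet n d).attach,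
      MvPolynomial.monomial (α : Fin n →₀ ℕ)
        (MvPolynomial.X (⟨i, ⟨α.1, by
          have h := α.2
          simp only [midxSet, Finset.mem_filter] at h
          exact h.2⟩⟩ : Idx n d))

/-- The coefficients `E_β ∈ C_{ℤ,d}` of `det(Jac(F[d])) − 1 = Σ_β E_β x^β`. -/
def Ecoef (n d : ℕ) (β : Fin n →₀ ℕ) : MvPolynomial (Idx n d) ℤ :=
  MvPolynomial.coeff β (jacDet (univFZ n d) - 1)

/-- The inclusion `C_{ℤ,d} → C_{ℚ,d}`. -/
def toQ (n d : ℕ) : MvPolynomial (Idx n d) ℤ →+* MvPolynomial (Idx n d) ℚ :=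
  MvPolynomial.map (Int.castRingHom ℚ)

/-- The ideal `I_ℚ^d ⊆ C_{ℚ,d}` generated by the coefficients `E_β`. -/
def Iqd (n d : ℕ) : Ideal (MvPolynomial (Idx n d) ℚ) :=
  Ideal.span (Set.range fun β : Fin n →₀ ℕ => toQ n d (Ecoef n d β))

/-- `J_ℤ^d := rad(I_ℚ^d) ∩ C_{ℤ,d}` as the contraction of the radical to `C_{ℤ,d}`. -/
def Jzd (n d : ℕ) : Ideal (MvPolynomial (Idx n d) ℤ) :=
  Ideal.comap (toQ n d) (Iqd n d).radical

/-- `ψ_F : C_{ℤ,d} → R`, evaluating `c_{i,α}` at the coefficient of `x^α` in `F_i`. -/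
def psi {n : ℕ} (d : ℕ) {R : Type*} [CommRing R] (F : Fin n → MvPolynomial (Fin n) R) :
    MvPolynomial (Idx n d) ℤ →+* R :=
  MvPolynomial.eval₂Hom (Int.castRingHom R) fun v => MvPolynomial.coeff v.2.1 (F v.1)

/-- `F` is a strong Keller map (w.r.t. degree bound `d`): `ψ_F` vanishes on `J_ℤ^d`. -/
def IsSKE (n d : ℕ) {R : Type*} [CommRing R] (F : Fin n → MvPolynomial (Fin n) R) : Prop :=
  ∀ Q ∈ Jzd n d, psi d F Q = 0

/-- `F` is a strong Keller map: for some degree bound `d ≥ 2` of `F`,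
`ψ_F` vanishes on `J_ℤ^d`. -/
def IsSKEAll (n : ℕ) {R : Type*} [CommRing R] (F : Fin n → MvPolynomial (Fin n) R) : Prop :=
  ∃ d, 2 ≤ d ∧ DegLE F d ∧ IsSKE n d F


/-- **Conjecture 1(1).** For every ℤ-algebra `R`, field `k` and surjective `τ : R → k`,
every invertible polynomial map over `k` with Jacobian determinant 1 lifts along `π` to an
invertible polynomial map over `R` with Jacobian determinant 1. -/
def Conj1_1 : Prop :=
  ∀ (n : ℕ), 1 ≤ n →
  ∀ (R : Type) [CommRing R], ∀ (k : Type) [Field k],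
  ∀ (τ : R →+* k), Function.Surjective τ →
  ∀ f : Fin n → MvPolynomial (Fin n) k, IsInvertible f → jacDet f = 1 →
    ∃ F : Fin n → MvPolynomial (Fin n) R, IsInvertible F ∧ jacDet F = 1 ∧
      ∀ i, MvPolynomial.map τ (F i) = f i

/-- **Conjecture 1(2).** For every ℤ-algebra `R`, field `k` and surjective `τ : R → k`,
every Keller map `F` over `R` whose image `π(F)` is invertible over `k` with Jacobian
determinant 1 is itself invertible over `R`. -/
def Conj1_2 : Prop :=
  ∀ (n : ℕ), 1 ≤ n →
  ∀ (R : Type) [CommRing R], ∀ (k : Type) [Field k],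
  ∀ (τ : R →+* k), Function.Surjective τ →
  ∀ F : Fin n → MvPolynomial (Fin n) R, jacDet F = 1 →
    IsInvertible (fun i => MvPolynomial.map τ (F i)) →
    jacDet (fun i => MvPolynomial.map τ (F i)) = 1 →
    IsInvertible F

/-- **Conjecture 2.** For every ℤ-algebra `R`, field `k` of characteristic `p`, and
surjective `τ : R → k`, every strong Keller map over `k` with affine part identity is the
image under `π` of a polynomial map over `R` with affine part identity and Jacobian
determinant 1. -/
def Conj2 : Prop :=
  ∀ (n : ℕ), 1 ≤ n →
  ∀ (R : Type) [CommRing R], ∀ (k : Type) [Field k], ∀ (p : ℕ), p.Prime → CharP k p →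
  ∀ (τ : R →+* k), Function.Surjective τ →
  ∀ f : Fin n → MvPolynomial (Fin n) k, AffinePartId f → IsSKEAll n f →
    ∃ F : Fin n → MvPolynomial (Fin n) R, AffinePartId F ∧ jacDet F = 1 ∧
      ∀ i, MvPolynomial.map τ (F i) = f i

section Aux

open Finsupp in
lemma mdeg_zero {n : ℕ} : mdeg (0 : Fin n →₀ ℕ) = 0 := by simp [mdeg]

lemma mdeg_single {n : ℕ} (j : Fin n) : mdeg (Finsupp.single j 1) = 1 := by
  simp [mdeg, Finsupp.sum_single_index]

lemma apply_le_mdeg {n : ℕ} (α : Fin n →₀ ℕ) (j : Fin n) : α j ≤ mdeg α := by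
  by_cases h : α j = 0
  · simp [h]
  · exact Finset.single_le_sum (fun _ _ => Nat.zero_le _) (Finsupp.mem_support_iff.2 h)

lemma mdeg_le_one_cases {n : ℕ} (α : Fin n →₀ ℕ) (h : mdeg α ≤ 1) :
    α = 0 ∨ ∃ j, α = Finsupp.single j 1 := by
  rcases Nat.le_one_iff_eq_zero_or_eq_one.1 h with h0 | h1
  · left
    ext j
    have := apply_le_mdeg α j
    simp only [Finsupp.coe_zero, Pi.zero_apply]
    omega
  · right
    have hne : α ≠ 0 := by
      intro h'
      rw [h', mdeg_zero] at h1
      omega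
    obtain ⟨j, hj⟩ : ∃ j, α j ≠ 0 := by
      by_contra hc
      push_neg at hc
      exact hne (Finsupp.ext fun j => hc j)
    refine ⟨j, Finsupp.ext fun l => ?_⟩
    rcases eq_or_ne l j with rfl | hl
    · have h2 := apply_le_mdeg α l
      rw [Finsupp.single_eq_same]
      omega
    · rw [Finsupp.single_eq_of_ne' (Ne.symm hl)]
      by_contra hc
      -- then mdeg α ≥ α j + α l ≥ 2
      have hsub : ({j, l} : Finset (Fin n)) ⊆ α.support := by
        intro x hx
        simp only [Finset.mem_insert, Finset.mem_singleton] at hx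
        rcases hx with rfl | rfl <;> simp [Finsupp.mem_support_iff, hj, hc]
      have : α j + α l ≤ mdeg α := by
        have := Finset.sum_le_sum_of_subset (f := fun x => α x) hsub
        rwa [Finset.sum_pair (Ne.symm hl)] at this
      omega

lemma constantCoeff_pderiv {n : ℕ} {R : Type*} [CommRing R] (j : Fin n)
    (p : MvPolynomial (Fin n) R) :
    MvPolynomial.constantCoeff (MvPolynomial.pderiv j p) = MvPolynomial.coeff (Finsupp.single j 1) p := by
  classical
  induction p using MvPolynomial.induction_on' with
  | monomial s a =>
    rw [MvPolynomial.pderiv_monomial, MvPolynomial.constantCoeff_monomial,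
      MvPolynomial.coeff_monomial]
    rcases eq_or_ne s (Finsupp.single j 1) with rfl | hs
    · simp
    · rw [if_neg hs]
      by_cases h0 : s - Finsupp.single j 1 = 0
      · have hle : s ≤ Finsupp.single j 1 := tsub_eq_zero_iff_le.mp h0
        have hsj : s j ≤ 1 := by simpa using hle j
        have hsj0 : s j = 0 := by
          rcases Nat.le_one_iff_eq_zero_or_eq_one.1 hsj with h | h
          · exact h
          · exfalso
            apply hs
            ext l
            rcases eq_or_ne l j with rfl | hl
            · simp [h]
            · have := hle l
              simp [Finsupp.single_eq_of_ne' (Ne.symm hl)] at this ⊢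
              omega
        simp [h0, hsj0]
      · simp [h0]
  | add p q hp hq => simp [hp, hq]

lemma jacDet_map {n : ℕ} {R S : Type*} [CommRing R] [CommRing S] (φ : R →+* S)
    (F : Fin n → MvPolynomial (Fin n) R) :
    jacDet (fun i => MvPolynomial.map φ (F i)) = MvPolynomial.map φ (jacDet F) := by
  unfold jacDet
  rw [RingHom.map_det]
  congr 1
  ext i l
  simp [Matrix.map, MvPolynomial.pderiv_map]

lemma mem_midxSet {n d : ℕ} {β : Fin n →₀ ℕ} :
    β ∈ midxSet n d ↔ 2 ≤ mdeg β ∧ mdeg β ≤ d := by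
  unfold midxSet
  rw [Finset.mem_filter, Finset.mem_Iic]
  constructor
  · exact fun h => h.2
  · intro h
    refine ⟨?_, h⟩
    intro l
    simpa using (apply_le_mdeg β l).trans h.2

end Aux

section Aux2

open MvPolynomial

lemma totalDegree_map_le' {n : ℕ} {R S : Type*} [CommRing R] [CommRing S] (φ : R →+* S)
    (p : MvPolynomial (Fin n) R) : (MvPolynomial.map φ p).totalDegree ≤ p.totalDegree :=
  Finset.sup_mono (MvPolynomial.support_map_subset _ _)

lemma map_psi_univFZ {n d : ℕ} {R : Type*} [CommRing R] (G : Fin n → MvPolynomial (Fin n) R)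
    (hA : AffinePartId G) (hd : DegLE G d) (i : Fin n) :
    MvPolynomial.map (psi d G) (univFZ n d i) = G i := by
  classical
  have hX : ∀ v : Idx n d, psi d G (MvPolynomial.X v) = MvPolynomial.coeff v.2.1 (G v.1) := by
    intro v
    simp [psi]
  rw [univFZ, map_add, map_sum]
  have hmon : ∀ α : {α // α ∈ midxSet n d},
      MvPolynomial.map (psi d G)
        (MvPolynomial.monomial (α : Fin n →₀ ℕ)
          (MvPolynomial.X (⟨i, ⟨α.1, by
            have h := α.2
            simp only [midxSet, Finset.mem_filter] at h
            exact h.2⟩⟩ : Idx n d))) =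
      MvPolynomial.monomial (α : Fin n →₀ ℕ) (MvPolynomial.coeff α.1 (G i)) := by
    intro α
    rw [MvPolynomial.map_monomial, hX]
  rw [Finset.sum_congr rfl fun α _ => hmon α, Finset.sum_attach (midxSet n d)
    (fun α => MvPolynomial.monomial α (MvPolynomial.coeff α (G i)))]
  have hXmap : MvPolynomial.map (psi d G) (MvPolynomial.X i) = (MvPolynomial.X i :
      MvPolynomial (Fin n) R) := MvPolynomial.map_X _ _
  rw [hXmap]
  ext β
  rw [MvPolynomial.coeff_add, MvPolynomial.coeff_sum]
  have hsum : ∑ α ∈ midxSet n d, MvPolynomial.coeff β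
      (MvPolynomial.monomial α (MvPolynomial.coeff α (G i))) =
      if β ∈ midxSet n d then MvPolynomial.coeff β (G i) else 0 := by
    rw [Finset.sum_congr rfl fun α _ => MvPolynomial.coeff_monomial β α _]
    exact Finset.sum_ite_eq' (midxSet n d) β _
  rw [hsum]
  by_cases hβ : β ∈ midxSet n d
  · rw [if_pos hβ]
    have h2 := (mem_midxSet.1 hβ).1
    have hXc : MvPolynomial.coeff β (MvPolynomial.X i : MvPolynomial (Fin n) R) = 0 := by
      rw [MvPolynomial.coeff_X']
      refine if_neg fun hc => ?_
      rw [← hc, mdeg_single] at h2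
      omega
    rw [hXc, zero_add]
  · rw [if_neg hβ, add_zero]
    rcases le_or_gt (mdeg β) 1 with h1 | h1
    · exact (hA i β h1).symm
    · have hd' : d < mdeg β := by
        by_contra hc
        push_neg at hc
        exact hβ (mem_midxSet.2 ⟨h1, hc⟩)
      have hG0 : MvPolynomial.coeff β (G i) = 0 := by
        by_contra hc
        have h3 := MvPolynomial.le_totalDegree (MvPolynomial.mem_support_iff.2 hc)
        have h4 := hd i
        have : mdeg β ≤ d := by
          unfold mdeg
          omega
        omega
      rw [hG0, MvPolynomial.coeff_X']
      refine if_neg fun hc => ?_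
      rw [← hc, mdeg_single] at h1
      omega

lemma psi_Ecoef {n d : ℕ} {R : Type*} [CommRing R] (G : Fin n → MvPolynomial (Fin n) R)
    (hA : AffinePartId G) (hd : DegLE G d) (β : Fin n →₀ ℕ) :
    psi d G (Ecoef n d β) = MvPolynomial.coeff β (jacDet G - 1) := by
  have h1 : MvPolynomial.map (psi d G) (jacDet (univFZ n d) - 1) = jacDet G - 1 := by
    rw [map_sub, map_one, ← jacDet_map]
    have h2 : (fun i => MvPolynomial.map (psi d G) (univFZ n d i)) = G :=
      funext (map_psi_univFZ G hA hd)
    rw [h2]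
  rw [Ecoef, ← MvPolynomial.coeff_map, h1]

lemma psi_zero_on_Jzd {n d : ℕ} {R : Type*} [CommRing R] [IsDomain R] [CharZero R]
    (G : Fin n → MvPolynomial (Fin n) R) (hA : AffinePartId G) (hd : DegLE G d)
    (hJ : jacDet G = 1) : ∀ Q ∈ Jzd n d, psi d G Q = 0 := by
  classical
  have hι : Function.Injective (algebraMap R (FractionRing R)) := IsFractionRing.injective R _
  set φ : MvPolynomial (Idx n d) ℚ →+* FractionRing R :=
    MvPolynomial.eval₂Hom (Rat.castHom (FractionRing R))
      (fun v => algebraMap R (FractionRing R) (MvPolynomial.coeff v.2.1 (G v.1))) with hφ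
  have hcomp : φ.comp (toQ n d) = (algebraMap R (FractionRing R)).comp (psi d G) := by
    apply MvPolynomial.ringHom_ext
    · intro r
      simp [hφ, toQ, psi]
    · intro v
      simp [hφ, toQ, psi]
  have hle : Iqd n d ≤ RingHom.ker φ := by
    rw [Iqd, Ideal.span_le]
    rintro _ ⟨β, rfl⟩
    have h2 : φ (toQ n d (Ecoef n d β)) = algebraMap R (FractionRing R) (psi d G (Ecoef n d β)) := by
      rw [← RingHom.comp_apply, hcomp, RingHom.comp_apply]
    rw [SetLike.mem_coe, RingHom.mem_ker, h2, psi_Ecoef G hA hd, hJ]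
    simp
  intro Q hQ
  have hrad : toQ n d Q ∈ (Iqd n d).radical := hQ
  obtain ⟨m, hm⟩ := hrad
  have h0 : φ (toQ n d Q) ^ m = 0 := by
    rw [← map_pow]
    exact hle hm
  have h1 : φ (toQ n d Q) = 0 := by
    rcases Nat.eq_zero_or_pos m with rfl | hmpos
    · simp at h0
    · exact (pow_eq_zero_iff hmpos.ne').mp h0
  have h2 : algebraMap R (FractionRing R) (psi d G Q) = 0 := by
    rw [← RingHom.comp_apply, ← hcomp, RingHom.comp_apply, h1]
  exact hι (by rw [h2, map_zero])

end Aux2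

/-- Assuming Conjectures 1(1) and 2: over a field `k` of characteristic
`p`, every invertible polynomial map with Jacobian determinant 1 and affine part identity
is a strong Keller map. -/
theorem invertible_is_strong_keller (h11 : Conj1_1) (h2 : Conj2) (n p : ℕ)
    (hn : 1 ≤ n) (hp : p.Prime) (k : Type) [Field k] [CharP k p]
    (f : Fin n → MvPolynomial (Fin n) k)
    (hinv : IsInvertible f) (hK : jacDet f = 1) (haff : AffinePartId f) :
    IsSKEAll n f := by
  classical
  let R : Type := MvPolynomial k ℤ
  let τ : R →+* k := MvPolynomial.eval₂Hom (Int.castRingHom k) id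
  have hτ : Function.Surjective τ := fun a => ⟨MvPolynomial.X a, by
    show MvPolynomial.eval₂Hom (Int.castRingHom k) id (MvPolynomial.X a) = a
    rw [MvPolynomial.eval₂Hom_X']
    rfl⟩
  obtain ⟨F, hFinv, hFjac, hFmap⟩ := h11 n hn R k τ hτ f hinv hK
  -- the linear part of F, as a matrix over R
  let L : Matrix (Fin n) (Fin n) R :=
    (Matrix.of fun i j => MvPolynomial.pderiv j (F i)).map MvPolynomial.constantCoeff
  have hdetL : L.det = 1 := by
    have h := congrArg MvPolynomial.constantCoeff hFjac
    rw [jacDet, RingHom.map_det] at h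
    simpa using h
  let L' : Matrix (Fin n) (Fin n) R := L.adjugate
  have hL'L : L' * L = 1 := by
    rw [show L' * L = L.adjugate * L from rfl, Matrix.adjugate_mul, hdetL, one_smul]
  have hdetL' : L'.det = 1 := by
    rw [show L'.det = L.adjugate.det from rfl, Matrix.det_adjugate, hdetL, one_pow]
  -- the normalization G of F
  let G : Fin n → MvPolynomial (Fin n) R := fun i =>
    ∑ m, MvPolynomial.C (L' i m) * (F m - MvPolynomial.C (MvPolynomial.constantCoeff (F m)))
  have hcoeff0 : ∀ i, MvPolynomial.coeff 0 (G i) = 0 := by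
    intro i
    simp [G, MvPolynomial.coeff_sum, MvPolynomial.coeff_C_mul, MvPolynomial.coeff_sub,
      MvPolynomial.coeff_zero_C, MvPolynomial.constantCoeff_eq]
  have hLcoeff : ∀ m j, L m j = MvPolynomial.coeff (Finsupp.single j 1) (F m) := by
    intro m j
    exact constantCoeff_pderiv j (F m)
  have hcoeffX : ∀ i j, MvPolynomial.coeff (Finsupp.single j 1) (G i) =
      if i = j then 1 else 0 := by
    intro i j
    have h1 : MvPolynomial.coeff (Finsupp.single j 1) (G i) = ∑ m, L' i m * L m j := by
      rw [show G i = ∑ m, MvPolynomial.C (L' i m) *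
        (F m - MvPolynomial.C (MvPolynomial.constantCoeff (F m))) from rfl,
        MvPolynomial.coeff_sum]
      refine Finset.sum_congr rfl fun m _ => ?_
      rw [MvPolynomial.coeff_C_mul, MvPolynomial.coeff_sub, MvPolynomial.coeff_C,
        if_neg (by
          intro hc
          have := congrArg mdeg hc
          rw [mdeg_zero, mdeg_single] at this
          omega), sub_zero, hLcoeff]
    rw [h1, ← Matrix.mul_apply, hL'L, Matrix.one_apply]
  have hGaff : AffinePartId G := by
    intro i α hα
    rcases mdeg_le_one_cases α hα with rfl | ⟨j, rfl⟩
    · rw [hcoeff0, MvPolynomial.coeff_zero_X]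
    · rw [hcoeffX, MvPolynomial.coeff_X']
      by_cases h : i = j
      · subst h
        simp
      · rw [if_neg h, if_neg (by
          intro hc
          exact h ((Finsupp.single_left_inj one_ne_zero).mp hc))]
  have hGjac : jacDet G = 1 := by
    have hmat : (Matrix.of fun i j => MvPolynomial.pderiv j (G i)) =
        (L'.map MvPolynomial.C) * (Matrix.of fun i j => MvPolynomial.pderiv j (F i)) := by
      refine Matrix.ext fun i j => ?_
      rw [Matrix.mul_apply]
      simp only [Matrix.of_apply, Matrix.map_apply]
      rw [show G i = ∑ m, MvPolynomial.C (L' i m) *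
        (F m - MvPolynomial.C (MvPolynomial.constantCoeff (F m))) from rfl, map_sum]
      refine Finset.sum_congr rfl fun m _ => ?_
      rw [MvPolynomial.pderiv_C_mul, map_sub, MvPolynomial.pderiv_C, sub_zero]
    have hdet2 : (L'.map (⇑(MvPolynomial.C : R →+* MvPolynomial (Fin n) R))).det =
        MvPolynomial.C L'.det := by
      rw [← RingHom.mapMatrix_apply]
      exact (RingHom.map_det _ _).symm
    rw [jacDet, hmat, Matrix.det_mul, hdet2, hdetL', map_one, one_mul]
    exact hFjac
  have hLτ : L.map τ = 1 := by
    ext i j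
    rw [Matrix.map_apply, Matrix.one_apply, hLcoeff, ← MvPolynomial.coeff_map, hFmap i,
      haff i (Finsupp.single j 1) (by rw [mdeg_single]), MvPolynomial.coeff_X']
    by_cases h : i = j
    · subst h
      simp
    · rw [if_neg h, if_neg (by
        intro hc
        exact h ((Finsupp.single_left_inj one_ne_zero).mp hc))]
  have hL'τ : L'.map τ = 1 := by
    have := (RingHom.map_adjugate τ L).symm
    rw [RingHom.mapMatrix_apply, RingHom.mapMatrix_apply] at this
    rw [show L'.map τ = (L.adjugate).map τ from rfl, ← this, hLτ, Matrix.adjugate_one]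
  have hc0 : ∀ m, τ (MvPolynomial.constantCoeff (F m)) = 0 := by
    intro m
    rw [← MvPolynomial.constantCoeff_map, hFmap m, MvPolynomial.constantCoeff_eq,
      haff m 0 (by rw [mdeg_zero]; omega), MvPolynomial.coeff_zero_X]
  have hGmap : ∀ i, MvPolynomial.map τ (G i) = f i := by
    intro i
    rw [show G i = ∑ m, MvPolynomial.C (L' i m) *
      (F m - MvPolynomial.C (MvPolynomial.constantCoeff (F m))) from rfl, map_sum]
    have hterm : ∀ m, MvPolynomial.map τ (MvPolynomial.C (L' i m) *
        (F m - MvPolynomial.C (MvPolynomial.constantCoeff (F m)))) =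
        MvPolynomial.C ((1 : Matrix (Fin n) (Fin n) k) i m) * f m := by
      intro m
      rw [map_mul, map_sub, MvPolynomial.map_C, MvPolynomial.map_C, hc0, map_zero, sub_zero,
        hFmap m]
      congr 2
      rw [← hL'τ, Matrix.map_apply]
    rw [Finset.sum_congr rfl fun m _ => hterm m]
    have : ∀ m, MvPolynomial.C ((1 : Matrix (Fin n) (Fin n) k) i m) * f m =
        if i = m then f m else 0 := by
      intro m
      rw [Matrix.one_apply]
      by_cases h : i = m <;> simp [h]
    rw [Finset.sum_congr rfl fun m _ => this m, Finset.sum_ite_eq, if_pos (Finset.mem_univ i)]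
  -- instances on R
  haveI : IsDomain R := inferInstanceAs (IsDomain (MvPolynomial k ℤ))
  haveI : CharZero R := charZero_of_injective_ringHom
    (f := (MvPolynomial.C : ℤ →+* MvPolynomial k ℤ)) (MvPolynomial.C_injective k ℤ)
  -- pick the degree bound
  set d := max 2 (Finset.univ.sup fun i => (G i).totalDegree) with hdd
  have hd2 : 2 ≤ d := le_max_left _ _
  have hdG : DegLE G d := by
    intro i
    have h1 : (G i).totalDegree ≤ Finset.univ.sup (fun i => (G i).totalDegree) :=
      Finset.le_sup (f := fun i => (G i).totalDegree) (Finset.mem_univ i)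
    exact h1.trans (le_max_right _ _)
  have hdf : DegLE f d := by
    intro i
    rw [← hGmap i]
    exact le_trans (totalDegree_map_le' τ (G i)) (hdG i)
  refine ⟨d, hd2, hdf, ?_⟩
  intro Q hQ
  have hψ : psi d f Q = τ (psi d G Q) := by
    have heq : (psi (R := k) d f) = τ.comp (psi d G) := by
      apply MvPolynomial.ringHom_ext
      · intro r
        simp [psi]
      · intro v
        simp only [psi, MvPolynomial.eval₂Hom_X', RingHom.coe_comp, Function.comp_apply]
        rw [← hGmap v.1, MvPolynomial.coeff_map]
    rw [heq]
    rfl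
  rw [hψ, psi_zero_on_Jzd G hGaff hdG hGjac Q hQ, map_zero]


end
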